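/- For fixed m and any k ≥ 0, h > 0, the QSD of the voter model on K_{n,m} satisfies lim_{n→∞} μ_{n,m}(k,h) = 0. -/

import Mathlib

/-!
In the eigen-equation at a state `(k, h)` with `h > 0` and `k` small compared with `n`, the
diagonal coefficient is at most about `1 - h / m` while the eigenvalue is `1 - O(1/n)`, so
`μ (k, h)` carries a gap of order `h / m`. Of the four inflows only the one from `(k - 1, h)` has
a coefficient of order one; the others are `O(1/n)` because `μ ≤ 1`. Hence
`μ (k, h) ≤ 2 μ (k - 1, h) + O(1/n)`, and induction on `k`, starting from `μ (-1, h) = 0`,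
gives the limit.
-/

/-- `μ` together with eigenvalue `l` is the (unique) quasi-stationary distribution of the
2-opinion voter model on the complete bipartite graph `K_{n,m}`, tracked by the pair
`(k,h)` of 'yes' counts in the parts of sizes `n` and `m`.  `μ` is extended by `0` outside
the grid `{0,…,n}×{0,…,m}`; the absorbing states `(0,0),(n,m)` and the unreachable states
`(0,m),(n,0)` carry zero mass; `μ` is a probability vector satisfying the left-eigenvector
equation with eigenvalue `l`, and is invariant under relabeling of the two opinions. -/
structure IsBipartiteVoterQSD (n m : ℕ) (μ : ℤ → ℤ → ℝ) (l : ℝ) : Prop where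
  nonneg : ∀ k h : ℤ, 0 ≤ μ k h
  zero_outside : ∀ k h : ℤ, (k < 0 ∨ (n : ℤ) < k ∨ h < 0 ∨ (m : ℤ) < h) → μ k h = 0
  zero_corner₁ : μ 0 0 = 0
  zero_corner₂ : μ n m = 0
  zero_bp₁ : μ 0 m = 0
  zero_bp₂ : μ n 0 = 0
  sum_one : ∑ k ∈ Finset.Icc (0 : ℤ) n, ∑ h ∈ Finset.Icc (0 : ℤ) m, μ k h = 1
  symm : ∀ k h : ℤ, μ k h = μ (n - k) (m - h)
  eigen : ∀ k h : ℤ, 0 ≤ k → k ≤ n → 0 ≤ h → h ≤ m →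
    ¬(k = 0 ∧ h = 0) → ¬(k = n ∧ h = m) →
    l * μ k h
      = μ k h * (((k : ℝ) * h + ((n : ℝ) - k) * ((m : ℝ) - h)) / ((n : ℝ) * m))
        + μ (k - 1) h * ((((n : ℝ) - k + 1) * h) / ((m : ℝ) * ((n : ℝ) + m)))
        + μ (k + 1) h * ((((k : ℝ) + 1) * ((m : ℝ) - h)) / ((m : ℝ) * ((n : ℝ) + m)))
        + μ k (h - 1) * ((((m : ℝ) - h + 1) * k) / ((n : ℝ) * ((n : ℝ) + m)))
        + μ k (h + 1) * ((((h : ℝ) + 1) * ((n : ℝ) - k)) / ((n : ℝ) * ((n : ℝ) + m)))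

open Filter Topology

theorem voter_diagonal_gap {k h n m : ℝ} (hk : 0 ≤ k) (hh : 1 ≤ h) (hhm : h ≤ m)
    (hkn : 4 * k ≤ n) (hmn : 8 * m ≤ n) :
    h / (2 * m) ≤ 1 - 2 / (n + m) - (k * h + (n - k) * (m - h)) / (n * m) := by
  have hm : 0 < m := by linarith
  have hn : 0 < n := by linarith
  have eigenvalue_deficit : 2 / (n + m) ≤ h / (4 * m) := by
    rw [div_le_div_iff₀ (by positivity) (by positivity)]
    nlinarith
  have diagonal : (k * h + (n - k) * (m - h)) / (n * m) ≤ 1 - h / m + h / (4 * m) := by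
    rw [div_le_iff₀ (by positivity)]
    field_simp
    nlinarith [mul_le_mul_of_nonneg_right hkn (by positivity : (0:ℝ) ≤ h * m),
      mul_nonneg hk (by linarith : (0:ℝ) ≤ m - h)]
  have : h / m = h / (2 * m) + h / (4 * m) + h / (4 * m) := by field_simp; ring
  linarith

theorem voter_neighbour_terms_le {a b c k h n m : ℝ} (ha : a ∈ Set.Icc 0 1)
    (hb : b ∈ Set.Icc 0 1) (hc : c ∈ Set.Icc 0 1) (hk : 0 ≤ k) (hh : 1 ≤ h) (hhm : h ≤ m)
    (hkn : k ≤ n) (hn : 0 < n) :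
    a * ((k + 1) * (m - h) / (m * (n + m))) + b * ((m - h + 1) * k / (n * (n + m)))
      + c * ((h + 1) * (n - k) / (n * (n + m))) ≤ 3 * ((k + 1) * (m + 1) / n) := by
  have hm : 0 < m := by linarith
  have hmh : 0 ≤ m - h := by linarith
  have hnk : 0 ≤ n - k := by linarith
  have weight_le {x y : ℝ} (hx : x ∈ Set.Icc (0:ℝ) 1) (hy0 : 0 ≤ y)
      (hy : y ≤ (k + 1) * (m + 1) / n) : x * y ≤ (k + 1) * (m + 1) / n :=
    (mul_le_of_le_one_left hy0 hx.2).trans hy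
  have hA := weight_le (y := (k + 1) * (m - h) / (m * (n + m))) ha (by positivity) (by
    rw [div_le_div_iff₀ (by positivity) hn]
    have : (m - h) * n ≤ (m + 1) * (m * (n + m)) := by nlinarith [mul_pos hm hn, mul_pos hm hm]
    nlinarith [mul_le_mul_of_nonneg_left this (by linarith : (0:ℝ) ≤ k + 1)])
  have hB := weight_le (y := (m - h + 1) * k / (n * (n + m))) hb (by positivity) (by
    rw [div_le_div_iff₀ (by positivity) hn]
    have hnum : (m - h + 1) * k ≤ (k + 1) * (m + 1) := by nlinarith
    have hden : n ≤ n * (n + m) := by nlinarith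
    nlinarith [mul_le_mul hnum hden hn.le (by positivity)])
  have hC := weight_le (y := (h + 1) * (n - k) / (n * (n + m))) hc (by positivity) (by
    rw [div_le_div_iff₀ (by positivity) hn]
    have : (h + 1) * (n - k) ≤ (k + 1) * (m + 1) * (n + m) := by
      nlinarith [mul_nonneg hk hn.le, mul_nonneg hk hm.le, mul_nonneg (mul_nonneg hk hm.le) hn.le,
        mul_nonneg (mul_nonneg hk hm.le) hm.le]
    nlinarith [mul_le_mul_of_nonneg_right this hn.le])
  linarith

namespace IsBipartiteVoterQSD

variable {n m : ℕ} {μ : ℤ → ℤ → ℝ} {l : ℝ}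

theorem le_one (q : IsBipartiteVoterQSD n m μ l) (k h : ℤ) : μ k h ≤ 1 := by
  by_cases hout : k < 0 ∨ (n : ℤ) < k ∨ h < 0 ∨ (m : ℤ) < h
  · simp [q.zero_outside k h hout]
  push Not at hout
  obtain ⟨hk0, hkn, hh0, hhm⟩ := hout
  calc μ k h ≤ ∑ h' ∈ Finset.Icc (0 : ℤ) m, μ k h' :=
        Finset.single_le_sum (fun i _ => q.nonneg k i) (Finset.mem_Icc.mpr ⟨hh0, hhm⟩)
    _ ≤ ∑ k' ∈ Finset.Icc (0 : ℤ) n, ∑ h' ∈ Finset.Icc (0 : ℤ) m, μ k' h' :=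
        Finset.single_le_sum (fun i _ => Finset.sum_nonneg fun j _ => q.nonneg i j)
          (Finset.mem_Icc.mpr ⟨hk0, hkn⟩)
    _ = 1 := q.sum_one

theorem mem_Icc (q : IsBipartiteVoterQSD n m μ l) (k h : ℤ) : μ k h ∈ Set.Icc 0 1 :=
  ⟨q.nonneg k h, q.le_one k h⟩

theorem le_two_mul_left_add (q : IsBipartiteVoterQSD n m μ l) (hl : 1 - 2 / ((n : ℝ) + m) ≤ l)
    {k h : ℤ} (hk : 0 ≤ k) (hh : 0 < h) (hhm : h ≤ m) (hkn : 4 * k ≤ n) (hmn : 8 * m ≤ n) :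
    μ k h ≤ 2 * μ (k - 1) h + 6 * m * ((k + 1) * (m + 1)) / n := by
  have hkR : (0 : ℝ) ≤ k := by exact_mod_cast hk
  have hhR : (1 : ℝ) ≤ h := by exact_mod_cast hh
  have hhmR : (h : ℝ) ≤ m := by exact_mod_cast hhm
  have hknR : 4 * (k : ℝ) ≤ n := by exact_mod_cast hkn
  have hmnR : 8 * (m : ℝ) ≤ n := by exact_mod_cast hmn
  have hm : (0 : ℝ) < m := by linarith
  have hn : (0 : ℝ) < n := by linarith
  have eigen := q.eigen k h hk (by omega) hh.le hhm (by omega) (by omega)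
  have gap : (h : ℝ) / (2 * m) ≤ l - (k * h + (n - k) * (m - h)) / (n * m) := by
    linarith [voter_diagonal_gap hkR hhR hhmR hknR hmnR]
  have inflow := voter_neighbour_terms_le (q.mem_Icc (k + 1) h) (q.mem_Icc k (h - 1))
    (q.mem_Icc k (h + 1)) hkR hhR hhmR (by linarith) hn
  have left_coeff : ((n : ℝ) - k + 1) * h / (m * (n + m)) ≤ h / m := by
    rw [div_le_div_iff₀ (by positivity) hm]
    nlinarith [mul_nonneg (mul_pos (by linarith : (0 : ℝ) < h) hm).le
      (by linarith : (0 : ℝ) ≤ m + k - 1)]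
  have key : h / (2 * m) * μ k h ≤ h / m * μ (k - 1) h + 3 * ((k + 1) * (m + 1) / n) := by
    nlinarith [mul_le_mul_of_nonneg_right gap (q.nonneg k h),
      mul_le_mul_of_nonneg_left left_coeff (q.nonneg (k - 1) h)]
  have hh0 : (0 : ℝ) < h := by linarith
  calc μ k h = 2 * m / h * (h / (2 * m) * μ k h) := by field_simp
    _ ≤ 2 * m / h * (h / m * μ (k - 1) h + 3 * ((k + 1) * (m + 1) / n)) := by gcongr
    _ = 2 * μ (k - 1) h + 6 * m * ((k + 1) * (m + 1) / n) / h := by field_simp; ring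
    _ ≤ 2 * μ (k - 1) h + 6 * m * ((k + 1) * (m + 1) / n) := by
      gcongr
      exact div_le_self (by positivity) hhR
    _ = 2 * μ (k - 1) h + 6 * m * ((k + 1) * (m + 1)) / n := by ring

end IsBipartiteVoterQSD

section Limit

variable {m : ℕ} {μ : ℕ → ℤ → ℤ → ℝ}

theorem tendsto_bipartiteVoterQSD_of_tendsto_left
    (hμ : ∀ᶠ n : ℕ in atTop, ∃ l, 1 - 2 / ((n : ℝ) + m) ≤ l ∧ IsBipartiteVoterQSD n m (μ n) l)
    {k h : ℤ} (hk : 0 ≤ k) (hh : 0 < h) (hhm : h ≤ m)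
    (hleft : Tendsto (fun n => μ n (k - 1) h) atTop (𝓝 0)) :
    Tendsto (fun n => μ n k h) atTop (𝓝 0) := by
  have hbound : ∀ᶠ n : ℕ in atTop,
      μ n k h ∈ Set.Icc 0 (2 * μ n (k - 1) h + 6 * m * ((k + 1) * (m + 1)) / n) := by
    filter_upwards [hμ, eventually_ge_atTop (4 * k.toNat), eventually_ge_atTop (8 * m)]
      with n ⟨l, hl, q⟩ hkn hmn
    exact ⟨q.nonneg k h, q.le_two_mul_left_add hl hk hh hhm (by omega) hmn⟩
  have hlim : Tendsto (fun n : ℕ => 2 * μ n (k - 1) h + 6 * m * ((k + 1) * (m + 1)) / n)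
      atTop (𝓝 0) := by
    simpa using (hleft.const_mul 2).add (tendsto_const_div_atTop_nhds_zero_nat _)
  exact tendsto_of_tendsto_of_tendsto_of_le_of_le' tendsto_const_nhds hlim
    (hbound.mono fun _ hn => hn.1) (hbound.mono fun _ hn => hn.2)

theorem tendsto_bipartiteVoterQSD_zero
    (hμ : ∀ᶠ n : ℕ in atTop, ∃ l, 1 - 2 / ((n : ℝ) + m) ≤ l ∧ IsBipartiteVoterQSD n m (μ n) l)
    {k h : ℤ} (hk : 0 ≤ k) (hh : 0 < h) (hhm : h ≤ m) :
    Tendsto (fun n => μ n k h) atTop (𝓝 0) := by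
  have hk₁ : -1 ≤ k := by omega
  clear hk
  induction k, hk₁ using Int.leInduction with
  | base =>
    refine tendsto_const_nhds.congr' ?_
    filter_upwards [hμ] with n ⟨_, _, q⟩
    exact (q.zero_outside _ _ (Or.inl (by norm_num))).symm
  | succ k hk' ih =>
    refine tendsto_bipartiteVoterQSD_of_tendsto_left hμ (by omega) hh hhm ?_
    simpa using ih

end Limit

theorem bipartite_qsd_small_part_vanishes (m : ℕ)
    (μ : ℕ → ℤ → ℤ → ℝ)
    (hμ : ∀ n : ℕ, m ≤ n → 3 ≤ n → IsBipartiteVoterQSD n m (μ n)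
      (1 - (2 * (1 - Real.sqrt (1 - 1 / (2 * (n : ℝ)) - 1 / (2 * (m : ℝ)))))
        / ((n : ℝ) + m))) :
    ∀ k h : ℤ, 0 ≤ k → 0 < h → h ≤ (m : ℤ) →
      Filter.Tendsto (fun n : ℕ => μ n k h) Filter.atTop (nhds 0) := by
  intro k h hk hh hhm
  refine tendsto_bipartiteVoterQSD_zero ?_ hk hh hhm
  filter_upwards [eventually_ge_atTop m, eventually_ge_atTop 3] with n hmn hn
  refine ⟨_, ?_, hμ n hmn hn⟩
  gcongr
  linarith [Real.sqrt_nonneg (1 - 1 / (2 * (n : ℝ)) - 1 / (2 * (m : ℝ)))]
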